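/- Let G be a finite non-cyclic group. Then the enhanced power graph P_E(G) is minimally edge connected if and only if any two maximal cyclic subgroups of G have the same order and any two distinct maximal cyclic subgroups of G intersect only in the identity element. -/

import Mathlib

/-!
The identity is adjacent to every vertex of the enhanced power graph, and two vertices are
adjacent exactly when they lie in a common maximal cyclic subgroup. In a finite graph with a
universal vertex `u`, every edge cut has at least `δ` edges, `δ` the minimum degree: a side `B`
avoiding `u` sends `|B|` edges to `u`, and each of its vertices sends at least `δ + 1 - |B|`
edges out of `B`. Hence the edge connectivity is `δ`, and a cut whose side `B` contains a vertex
of degree `> δ` has more than `δ` edges.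

If the maximal cyclic subgroups all have order `n` and meet trivially, every non-identity
element has degree `n - 1`, so deleting an edge lowers the degree of a non-identity endpoint,
and with it the edge connectivity. Otherwise some non-identity `y` has degree `> δ` (a generator
of a larger maximal cyclic subgroup, or a non-identity element of an intersection), and after
deleting the edge `{1, y}` a vertex of degree `δ` still realises edge connectivity `δ`.
-/

/-- The degree of a vertex: the number of its neighbours. -/
noncomputable def gDeg {V : Type*} (G : SimpleGraph V) (v : V) : ℕ :=
  (G.neighborSet v).ncard

/-- The minimum degree of a graph. -/
noncomputable def minDeg {V : Type*} (G : SimpleGraph V) : ℕ :=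
  sInf (Set.range (gDeg G))

/-- The edge connectivity: the minimum size of a set of edges whose removal
disconnects the graph. -/
noncomputable def edgeConn {V : Type*} (G : SimpleGraph V) : ℕ :=
  sInf {n : ℕ | ∃ S : Set (Sym2 V), S ⊆ G.edgeSet ∧ S.ncard = n ∧
    ¬ (G.deleteEdges S).Connected}

/-- The vertex connectivity: the minimum size of a set of vertices whose removal
disconnects the graph or leaves a single vertex. -/
noncomputable def vertexConn {V : Type*} (G : SimpleGraph V) : ℕ :=
  sInf {n : ℕ | ∃ S : Set V, S.ncard = n ∧ Sᶜ.Nonempty ∧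
    (¬ (G.induce Sᶜ).Preconnected ∨ Sᶜ.ncard = 1)}

/-- A graph is minimally edge connected if deleting any edge decreases the
edge connectivity by one. -/
def MinEdgeConnected {V : Type*} (G : SimpleGraph V) : Prop :=
  ∀ e ∈ G.edgeSet, edgeConn (G.deleteEdges {e}) = edgeConn G - 1

/-- A graph is minimally connected if deleting any edge decreases the
vertex connectivity by one. -/
def MinConnected {V : Type*} (G : SimpleGraph V) : Prop :=
  ∀ e ∈ G.edgeSet, vertexConn (G.deleteEdges {e}) = vertexConn G - 1

/-- The power graph of a group: distinct `x, y` are adjacent iff one is a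
natural power of the other. -/
def powerGraph (G : Type*) [Group G] : SimpleGraph G :=
  SimpleGraph.fromRel (fun x y => ∃ m : ℕ, y = x ^ m)

/-- The enhanced power graph of a group: distinct `x, y` are adjacent iff they
lie in a common cyclic subgroup. -/
def enhancedPowerGraph (G : Type*) [Group G] : SimpleGraph G :=
  SimpleGraph.fromRel
    (fun x y => ∃ z : G, x ∈ Subgroup.zpowers z ∧ y ∈ Subgroup.zpowers z)

/-- The order superpower graph of a group: distinct `x, y` are adjacent iff the
order of one divides the order of the other. -/
def superpowerGraph (G : Type*) [Group G] : SimpleGraph G :=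
  SimpleGraph.fromRel (fun x y => orderOf x ∣ orderOf y)

/-- A subgroup is a maximal cyclic subgroup if it is cyclic (generated by one
element) and is not properly contained in any cyclic subgroup. -/
def IsMaxCyclic {G : Type*} [Group G] (H : Subgroup G) : Prop :=
  (∃ g : G, H = Subgroup.zpowers g) ∧
    ∀ K : Subgroup G, (∃ g : G, K = Subgroup.zpowers g) → H ≤ K → K = H

open SimpleGraph Finset

section EdgeConnectivity

variable {V : Type*} {Γ : SimpleGraph V}

lemma ncard_incidenceSet (Γ : SimpleGraph V) (x : V) : (Γ.incidenceSet x).ncard = gDeg Γ x := by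
  classical
  exact Set.ncard_congr' (Γ.incidenceSetEquivNeighborSet x)

lemma not_connected_deleteEdges_incidenceSet {x w : V} (hxw : x ≠ w) :
    ¬ (Γ.deleteEdges (Γ.incidenceSet x)).Connected := by
  intro hconn
  obtain ⟨p⟩ := hconn.preconnected x w
  cases p with
  | nil => exact hxw rfl
  | cons h _ =>
    obtain ⟨hadj, hnot⟩ := deleteEdges_adj.mp h
    exact hnot ((Γ.mem_incidenceSet x _).mpr hadj)

lemma edgeConn_le_gDeg [Nontrivial V] (Γ : SimpleGraph V) (x : V) : edgeConn Γ ≤ gDeg Γ x := by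
  obtain ⟨w, hw⟩ := exists_ne x
  exact Nat.sInf_le ⟨Γ.incidenceSet x, Γ.incidenceSet_subset x, ncard_incidenceSet Γ x,
    not_connected_deleteEdges_incidenceSet hw.symm⟩

lemma le_edgeConn [Nontrivial V] {δ : ℕ}
    (h : ∀ S ⊆ Γ.edgeSet, ¬ (Γ.deleteEdges S).Connected → δ ≤ S.ncard) : δ ≤ edgeConn Γ := by
  obtain ⟨x, w, hxw⟩ := exists_pair_ne V
  refine le_csInf ⟨_, Γ.incidenceSet x, Γ.incidenceSet_subset x, rfl,
    not_connected_deleteEdges_incidenceSet hxw⟩ ?_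
  rintro n ⟨S, hS, rfl, hcut⟩
  exact h S hS hcut

lemma edgeConn_le_edgeConn_deleteEdges_add_one {e : Sym2 V} (he : e ∈ Γ.edgeSet) :
    edgeConn Γ ≤ edgeConn (Γ.deleteEdges {e}) + 1 := by
  have : Nontrivial V := by
    induction e using Sym2.ind with
    | _ x y => exact ⟨x, y, Γ.ne_of_adj he⟩
  rw [← Nat.sub_le_iff_le_add]
  refine le_edgeConn fun S hS hcut => ?_
  rw [deleteEdges_deleteEdges, Set.singleton_union] at hcut
  have hsub : insert e S ⊆ Γ.edgeSet :=
    Set.insert_subset he (hS.trans (edgeSet_mono (deleteEdges_le _)))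
  have : edgeConn Γ ≤ (insert e S).ncard := Nat.sInf_le ⟨insert e S, hsub, rfl, hcut⟩
  have := Set.ncard_insert_le e S
  omega

lemma gDeg_pos_of_adj [Finite V] {x w : V} (h : Γ.Adj x w) : 0 < gDeg Γ x :=
  (Set.ncard_pos (Set.toFinite _)).mpr ⟨w, h⟩

lemma gDeg_le_gDeg_of_forall_adj [Finite V] {u : V} (hu : ∀ v ≠ u, Γ.Adj u v) (v : V) :
    gDeg Γ v ≤ gDeg Γ u := by
  have hv : Γ.neighborSet v ⊆ {v}ᶜ := fun _ h => (Γ.ne_of_adj h).symm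
  have hu' : Γ.neighborSet u = {u}ᶜ := Set.ext fun w => ⟨fun h => (Γ.ne_of_adj h).symm, hu w⟩
  calc gDeg Γ v ≤ ({v}ᶜ : Set V).ncard := Set.ncard_le_ncard hv
    _ = ({u}ᶜ : Set V).ncard := by rw [Set.ncard_compl, Set.ncard_compl]; simp
    _ = gDeg Γ u := by rw [gDeg, hu']

lemma gDeg_deleteEdges_of_notMem {e : Sym2 V} {x : V} (hx : x ∉ e) :
    gDeg (Γ.deleteEdges {e}) x = gDeg Γ x := by
  unfold gDeg
  congr 1
  ext v
  simp only [mem_neighborSet, deleteEdges_adj, Set.mem_singleton_iff, and_iff_left_iff_imp]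
  rintro - rfl
  exact hx (Sym2.mem_mk_left x v)

lemma gDeg_deleteEdges_of_adj [Finite V] {x y : V} (h : Γ.Adj x y) :
    gDeg (Γ.deleteEdges {s(x, y)}) x = gDeg Γ x - 1 := by
  have : (Γ.deleteEdges {s(x, y)}).neighborSet x = Γ.neighborSet x \ {y} := by
    ext v
    simp only [mem_neighborSet, deleteEdges_adj, Set.mem_singleton_iff, Set.mem_sdiff,
      Sym2.eq_iff, true_and, and_congr_right_iff]
    intro hv
    constructor
    · exact fun h' hy => h' (Or.inl hy)
    · rintro h' (rfl | ⟨rfl, rfl⟩)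
      exacts [h' rfl, hv.ne rfl]
  unfold gDeg
  rw [this, Set.ncard_sdiff_singleton_of_mem (s := Γ.neighborSet x) h]

lemma exists_edgeBoundary_subset_of_not_connected [Fintype V] (u : V) {T : Set (Sym2 V)}
    (hT : ¬ (Γ.deleteEdges T).Connected) :
    ∃ B : Finset V, B.Nonempty ∧ u ∉ B ∧ ∀ b ∈ B, ∀ a ∉ B, Γ.Adj b a → s(b, a) ∈ T := by
  classical
  refine ⟨({v | ¬ (Γ.deleteEdges T).Reachable u v} : Finset V), ?_, by simp, ?_⟩
  · by_contra hB
    simp only [Finset.not_nonempty_iff_eq_empty, Finset.filter_eq_empty_iff, Finset.mem_univ,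
      not_not, true_implies] at hB
    exact hT ((connected_iff_exists_forall_reachable _).mpr ⟨u, hB⟩)
  · intro b hb a ha hadj
    by_contra hbaT
    simp only [Finset.mem_filter, Finset.mem_univ, true_and, not_not] at hb ha
    exact hb (ha.trans (deleteEdges_adj.mpr ⟨hadj.symm, by rwa [Sym2.eq_swap]⟩).reachable)

lemma card_le_ncard_of_edgeBoundary_subset [Finite V] {u : V} (hu : ∀ v ≠ u, Γ.Adj u v)
    {B : Finset V} (huB : u ∉ B) {T : Set (Sym2 V)}
    (hT : ∀ b ∈ B, ∀ a ∉ B, Γ.Adj b a → s(b, a) ∈ T) :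
    #B ≤ T.ncard := by
  rw [← Set.ncard_coe_finset]
  refine Set.ncard_le_ncard_of_injOn (fun b => s(b, u))
    (fun b hb => hT b hb u huB (hu b ?_).symm) fun b _ b' _ h => Sym2.congr_left.mp h
  rintro rfl
  exact huB hb

lemma sum_gDeg_le_ncard_add [Fintype V] {B : Finset V} {T : Set (Sym2 V)}
    (hT : ∀ b ∈ B, ∀ a ∉ B, Γ.Adj b a → s(b, a) ∈ T) :
    ∑ b ∈ B, gDeg Γ b ≤ T.ncard + #B * (#B - 1) := by
  classical
  set out : V → Finset V := fun b => {a | Γ.Adj b a ∧ a ∉ B}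
  have hdeg : ∀ b ∈ B, gDeg Γ b ≤ #(out b) + (#B - 1) := by
    intro b hb
    have hsub : Γ.neighborSet b ⊆ ↑(out b ∪ B.erase b) := by
      intro a ha
      by_cases haB : a ∈ B
      · simp [haB, (Γ.ne_of_adj ha).symm]
      · simpa [out, haB] using ha
    calc gDeg Γ b ≤ #(out b ∪ B.erase b) := by
          rw [gDeg, ← Set.ncard_coe_finset]; exact Set.ncard_le_ncard hsub
      _ ≤ #(out b) + #(B.erase b) := card_union_le _ _
      _ = #(out b) + (#B - 1) := by rw [card_erase_of_mem hb]
  have hout : ∑ b ∈ B, #(out b) ≤ T.ncard := by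
    rw [← card_sigma, ← Set.ncard_coe_finset]
    refine Set.ncard_le_ncard_of_injOn (fun p => s(p.1, p.2)) ?_ ?_
    · rintro ⟨b, a⟩ hp
      simp only [coe_sigma, Set.mem_sigma_iff, mem_coe, out, mem_filter, mem_univ, true_and] at hp
      exact hT b hp.1 a hp.2.2 hp.2.1
    · rintro ⟨b, a⟩ hp ⟨b', a'⟩ hp' h
      simp only [coe_sigma, Set.mem_sigma_iff, mem_coe, out, mem_filter, mem_univ,
        true_and] at hp hp'
      rcases Sym2.eq_iff.mp h with ⟨rfl, rfl⟩ | ⟨rfl, rfl⟩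
      · rfl
      · exact absurd hp.1 hp'.2.2
  calc ∑ b ∈ B, gDeg Γ b ≤ ∑ b ∈ B, (#(out b) + (#B - 1)) := sum_le_sum hdeg
    _ = ∑ b ∈ B, #(out b) + #B * (#B - 1) := by rw [sum_add_distrib, sum_const, smul_eq_mul]
    _ ≤ T.ncard + #B * (#B - 1) := by gcongr

lemma min_le_ncard_of_edgeBoundary_subset [Fintype V] {u : V} (hu : ∀ v ≠ u, Γ.Adj u v)
    {B : Finset V} (huB : u ∉ B) {T : Set (Sym2 V)}
    (hT : ∀ b ∈ B, ∀ a ∉ B, Γ.Adj b a → s(b, a) ∈ T) {δ : ℕ} (hδ : ∀ b ∈ B, δ ≤ gDeg Γ b)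
    {y : V} (hy : y ∈ B) :
    min (δ + 1) (gDeg Γ y) ≤ T.ncard := by
  classical
  have hcard := card_le_ncard_of_edgeBoundary_subset hu huB hT
  have hsum := sum_gDeg_le_ncard_add hT
  obtain ⟨k, hk⟩ : ∃ k, #B = k + 1 := Nat.exists_eq_succ_of_ne_zero (card_pos.mpr ⟨y, hy⟩).ne'
  have hlow : k * δ + gDeg Γ y ≤ ∑ b ∈ B, gDeg Γ b := by
    rw [← add_sum_erase B _ hy]
    have := card_nsmul_le_sum (B.erase y) (fun b => gDeg Γ b) δ fun b hb =>
      hδ b (mem_of_mem_erase hb)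
    rw [card_erase_of_mem hy, hk, Nat.add_sub_cancel, smul_eq_mul] at this
    omega
  rw [hk, Nat.add_sub_cancel] at hsum
  -- A small side spends at most `(k + 1) k ≤ k δ` of its degree inside `B`; a large side
  -- already has its `k + 1` edges to `u`.
  rcases le_or_gt (k + 1) δ with hkδ | hkδ
  · have : (k + 1) * k ≤ k * δ := by rw [mul_comm]; exact Nat.mul_le_mul_left k hkδ
    exact (min_le_right _ _).trans (by omega)
  · exact (min_le_left _ _).trans (by omega)

lemma le_ncard_of_not_connected [Fintype V] {u : V} (hu : ∀ v ≠ u, Γ.Adj u v) {δ : ℕ}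
    (hδ : ∀ v, δ ≤ gDeg Γ v) {T : Set (Sym2 V)} (hT : ¬ (Γ.deleteEdges T).Connected) :
    δ ≤ T.ncard := by
  obtain ⟨B, ⟨y, hy⟩, huB, hB⟩ := exists_edgeBoundary_subset_of_not_connected u hT
  exact (le_min δ.le_succ (hδ y)).trans
    (min_le_ncard_of_edgeBoundary_subset hu huB hB (fun b _ => hδ b) hy)

lemma edgeConn_eq_gDeg [Fintype V] [Nontrivial V] {u : V} (hu : ∀ v ≠ u, Γ.Adj u v) {x : V}
    (hx : ∀ v, gDeg Γ x ≤ gDeg Γ v) : edgeConn Γ = gDeg Γ x :=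
  le_antisymm (edgeConn_le_gDeg Γ x) (le_edgeConn fun _ _ hT => le_ncard_of_not_connected hu hx hT)

lemma ne_of_gDeg_lt [Finite V] {u x y : V} (hu : ∀ v ≠ u, Γ.Adj u v)
    (hxy : gDeg Γ x < gDeg Γ y) : x ≠ u := by
  rintro rfl
  exact (hxy.trans_le (gDeg_le_gDeg_of_forall_adj hu y)).false

lemma edgeConn_deleteEdges_eq_gDeg [Fintype V] {u x y : V} (hu : ∀ v ≠ u, Γ.Adj u v)
    (hyu : y ≠ u) (hx : ∀ v, gDeg Γ x ≤ gDeg Γ v) (hxy : gDeg Γ x < gDeg Γ y) :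
    edgeConn (Γ.deleteEdges {s(u, y)}) = gDeg Γ x := by
  have : Nontrivial V := ⟨⟨y, u, hyu⟩⟩
  have hxe : x ∉ s(u, y) := by
    simp only [Sym2.mem_iff, not_or]
    exact ⟨ne_of_gDeg_lt hu hxy, hxy.ne'.symm ∘ congrArg (gDeg Γ)⟩
  apply le_antisymm
  · calc _ ≤ gDeg (Γ.deleteEdges {s(u, y)}) x := edgeConn_le_gDeg _ x
      _ = gDeg Γ x := gDeg_deleteEdges_of_notMem hxe
  refine le_edgeConn fun S _ hS => ?_
  rw [deleteEdges_deleteEdges, Set.singleton_union] at hS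
  obtain ⟨B, ⟨b, hb⟩, huB, hB⟩ := exists_edgeBoundary_subset_of_not_connected u hS
  by_cases hyB : y ∈ B
  · have := min_le_ncard_of_edgeBoundary_subset hu huB hB (fun v _ => hx v) hyB
    have := Set.ncard_insert_le s(u, y) S
    omega
  · -- `s(u, y)` does not cross the boundary of `B`, so `S` alone separates `B`.
    have hB' : ∀ b ∈ B, ∀ a ∉ B, Γ.Adj b a → s(b, a) ∈ S := by
      intro b hb a ha hadj
      refine (hB b hb a ha hadj).resolve_left ?_
      intro h
      rcases Sym2.eq_iff.mp h with ⟨rfl, -⟩ | ⟨rfl, -⟩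
      exacts [huB hb, hyB hb]
    exact (le_min (gDeg Γ x).le_succ (hx b)).trans
      (min_le_ncard_of_edgeBoundary_subset hu huB hB' (fun v _ => hx v) hb)

theorem not_minEdgeConnected_of_gDeg_lt [Fintype V] {u x y : V} (hu : ∀ v ≠ u, Γ.Adj u v)
    (hyu : y ≠ u) (hxy : gDeg Γ x < gDeg Γ y) : ¬ MinEdgeConnected Γ := by
  intro h
  have : Nontrivial V := ⟨⟨y, u, hyu⟩⟩
  obtain ⟨x₀, hx₀⟩ := Finite.exists_min (gDeg Γ)
  have hx₀y : gDeg Γ x₀ < gDeg Γ y := (hx₀ x).trans_lt hxy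
  have hpos := gDeg_pos_of_adj (hu x₀ (ne_of_gDeg_lt hu hx₀y)).symm
  have := h s(u, y) (hu y hyu)
  rw [edgeConn_deleteEdges_eq_gDeg hu hyu hx₀ hx₀y, edgeConn_eq_gDeg hu hx₀] at this
  omega

theorem minEdgeConnected_of_gDeg_eq [Fintype V] {u : V} (hu : ∀ v ≠ u, Γ.Adj u v) {d : ℕ}
    (hd : ∀ v ≠ u, gDeg Γ v = d) : MinEdgeConnected Γ := by
  suffices h : ∀ x y, Γ.Adj x y → x ≠ u →
      edgeConn (Γ.deleteEdges {s(x, y)}) = edgeConn Γ - 1 by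
    intro e he
    induction e using Sym2.ind with
    | _ x y =>
      by_cases hx : x = u
      · subst hx
        rw [Sym2.eq_swap]
        exact h y x (Γ.adj_symm he) (Γ.ne_of_adj he).symm
      · exact h x y he hx
  intro x y hxy hxu
  have : Nontrivial V := ⟨⟨x, u, hxu⟩⟩
  have hx : ∀ v, gDeg Γ x ≤ gDeg Γ v := by
    intro v
    by_cases hv : v = u
    · exact hv ▸ gDeg_le_gDeg_of_forall_adj hu x
    · rw [hd x hxu, hd v hv]
  have hΓ := edgeConn_eq_gDeg hu hx
  apply le_antisymm
  · calc _ ≤ gDeg (Γ.deleteEdges {s(x, y)}) x := edgeConn_le_gDeg _ x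
      _ = edgeConn Γ - 1 := by rw [gDeg_deleteEdges_of_adj hxy, hΓ]
  · have := edgeConn_le_edgeConn_deleteEdges_add_one (Γ := Γ) (e := s(x, y)) hxy
    omega

end EdgeConnectivity

section EnhancedPowerGraph

open Subgroup

variable {G : Type*} [Group G]

lemma enhancedPowerGraph_adj {x y : G} :
    (enhancedPowerGraph G).Adj x y ↔ x ≠ y ∧ ∃ z : G, x ∈ zpowers z ∧ y ∈ zpowers z := by
  rw [enhancedPowerGraph, fromRel_adj]
  refine and_congr_right fun _ => ⟨?_, Or.inl⟩
  rintro (h | ⟨z, hy, hx⟩)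
  exacts [h, ⟨z, hx, hy⟩]

lemma enhancedPowerGraph_adj_one {x : G} (hx : x ≠ 1) : (enhancedPowerGraph G).Adj 1 x :=
  enhancedPowerGraph_adj.mpr ⟨hx.symm, x, one_mem _, mem_zpowers x⟩

lemma isMaxCyclic_iff_maximal {M : Subgroup G} :
    IsMaxCyclic M ↔ Maximal (fun K : Subgroup G => ∃ g, K = zpowers g) M :=
  ⟨fun h => ⟨h.1, fun _ hK hMK => (h.2 _ hK hMK).le⟩,
    fun h => ⟨h.1, fun _ hK hMK => le_antisymm (h.2 hK hMK) hMK⟩⟩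

lemma exists_isMaxCyclic_le [Finite G] (g : G) : ∃ M, IsMaxCyclic M ∧ zpowers g ≤ M := by
  obtain ⟨M, hle, hM⟩ :=
    Finite.exists_le_maximal (p := fun K : Subgroup G => ∃ g, K = zpowers g) ⟨g, rfl⟩
  exact ⟨M, isMaxCyclic_iff_maximal.mpr hM, hle⟩

lemma enhancedPowerGraph_adj_iff_exists_isMaxCyclic [Finite G] {x y : G} :
    (enhancedPowerGraph G).Adj x y ↔ x ≠ y ∧ ∃ M, IsMaxCyclic M ∧ x ∈ M ∧ y ∈ M := by
  rw [enhancedPowerGraph_adj]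
  refine and_congr_right fun _ => ⟨fun ⟨z, hx, hy⟩ => ?_, fun ⟨M, hM, hx, hy⟩ => ?_⟩
  · obtain ⟨M, hM, hzM⟩ := exists_isMaxCyclic_le z
    exact ⟨M, hM, hzM hx, hzM hy⟩
  · obtain ⟨g, rfl⟩ := hM.1
    exact ⟨g, hx, hy⟩

lemma gDeg_enhancedPowerGraph_of_unique [Finite G] {M : Subgroup G} (hM : IsMaxCyclic M)
    {x : G} (hx : x ∈ M) (huniq : ∀ N, IsMaxCyclic N → x ∈ N → N = M) :
    gDeg (enhancedPowerGraph G) x = Nat.card M - 1 := by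
  have : (enhancedPowerGraph G).neighborSet x = (M : Set G) \ {x} := by
    ext y
    simp only [mem_neighborSet, enhancedPowerGraph_adj_iff_exists_isMaxCyclic, Set.mem_sdiff,
      SetLike.mem_coe, Set.mem_singleton_iff]
    constructor
    · rintro ⟨hxy, N, hN, hxN, hyN⟩
      exact ⟨huniq N hN hxN ▸ hyN, hxy.symm⟩
    · rintro ⟨hyM, hyx⟩
      exact ⟨Ne.symm hyx, M, hM, hx, hyM⟩
  rw [gDeg, this, Set.ncard_sdiff_singleton_of_mem hx, ← Nat.card_coe_set_eq,
    SetLike.coe_sort_coe]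

lemma IsMaxCyclic.gDeg_generator [Finite G] {g : G} (hM : IsMaxCyclic (zpowers g)) :
    gDeg (enhancedPowerGraph G) g = Nat.card (zpowers g) - 1 :=
  gDeg_enhancedPowerGraph_of_unique hM (mem_zpowers g) fun N hN hgN =>
    hM.2 N hN.1 (zpowers_le.mpr hgN)

lemma gDeg_eq_card_sub_one_of_mem [Finite G]
    (hinf : ∀ M N : Subgroup G, IsMaxCyclic M → IsMaxCyclic N → M ≠ N → M ⊓ N = ⊥)
    {M : Subgroup G} (hM : IsMaxCyclic M) {x : G} (hxM : x ∈ M) (hx : x ≠ 1) :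
    gDeg (enhancedPowerGraph G) x = Nat.card M - 1 := by
  refine gDeg_enhancedPowerGraph_of_unique hM hxM fun N hN hxN => ?_
  by_contra hNM
  have hxNM : x ∈ N ⊓ M := mem_inf.mpr ⟨hxN, hxM⟩
  rw [hinf N M hN hM hNM, mem_bot] at hxNM
  exact hx hxNM

lemma card_le_gDeg_of_mem_inf [Finite G] {M N : Subgroup G} (hM : IsMaxCyclic M)
    (hN : IsMaxCyclic N) (hMN : M ≠ N) {x : G} (hx : x ∈ M ⊓ N) :
    Nat.card M ≤ gDeg (enhancedPowerGraph G) x := by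
  obtain ⟨hxM, hxN⟩ := mem_inf.mp hx
  obtain ⟨w, hwN, hwM⟩ := SetLike.not_le_iff_exists.mp fun hle => hMN (hN.2 M hM.1 hle)
  have hsub : insert w ((M : Set G) \ {x}) ⊆ (enhancedPowerGraph G).neighborSet x := by
    rintro y (rfl | ⟨hyM, hyx⟩)
    · exact enhancedPowerGraph_adj_iff_exists_isMaxCyclic.mpr
        ⟨fun h => hwM (h ▸ hxM), N, hN, hxN, hwN⟩
    · exact enhancedPowerGraph_adj_iff_exists_isMaxCyclic.mpr ⟨Ne.symm hyx, M, hM, hxM, hyM⟩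
  calc Nat.card M = (insert w ((M : Set G) \ {x})).ncard := by
        rw [Set.ncard_insert_of_notMem fun h => hwM h.1,
          Set.ncard_sdiff_singleton_of_mem (s := (M : Set G)) hxM, ← Nat.card_coe_set_eq, SetLike.coe_sort_coe, Nat.sub_add_cancel Nat.card_pos]
    _ ≤ gDeg _ x := Set.ncard_le_ncard hsub

lemma exists_gDeg_lt_of_card_lt [Finite G] {M N : Subgroup G} (hM : IsMaxCyclic M)
    (hN : IsMaxCyclic N) (hMN : Nat.card M < Nat.card N) :
    ∃ x y : G, y ≠ 1 ∧ gDeg (enhancedPowerGraph G) x < gDeg (enhancedPowerGraph G) y := by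
  obtain ⟨g, rfl⟩ := hM.1
  obtain ⟨h, rfl⟩ := hN.1
  have hg : 0 < Nat.card (zpowers g) := Nat.card_pos
  refine ⟨g, h, ?_, ?_⟩
  · rintro rfl
    rw [zpowers_one_eq_bot, card_bot] at hMN
    omega
  · rw [hM.gDeg_generator, hN.gDeg_generator]
    omega

lemma exists_gDeg_lt_of_inf_ne_bot [Finite G] {M N : Subgroup G} (hM : IsMaxCyclic M)
    (hN : IsMaxCyclic N) (hMN : M ≠ N) (hinf : M ⊓ N ≠ ⊥) :
    ∃ x y : G, y ≠ 1 ∧ gDeg (enhancedPowerGraph G) x < gDeg (enhancedPowerGraph G) y := by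
  obtain ⟨a, ha, ha1⟩ := (M ⊓ N).bot_or_exists_ne_one.resolve_left hinf
  obtain ⟨g, rfl⟩ := hM.1
  have hg : 0 < Nat.card (zpowers g) := Nat.card_pos
  refine ⟨g, a, ha1, ?_⟩
  rw [hM.gDeg_generator]
  have := card_le_gDeg_of_mem_inf hM hN hMN ha
  omega

end EnhancedPowerGraph

theorem stmt_2_general (G : Type*) [Group G] [Fintype G] :
    MinEdgeConnected (enhancedPowerGraph G) ↔
      ∀ M N : Subgroup G, IsMaxCyclic M → IsMaxCyclic N →
        Nat.card M = Nat.card N ∧ (M ≠ N → M ⊓ N = ⊥) := by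
  have hu : ∀ v ≠ 1, (enhancedPowerGraph G).Adj 1 v := fun _ => enhancedPowerGraph_adj_one
  constructor
  · intro h M N hM hN
    have hdeg : ¬ ∃ x y : G, y ≠ 1 ∧
        gDeg (enhancedPowerGraph G) x < gDeg (enhancedPowerGraph G) y :=
      fun ⟨_, _, hy, hxy⟩ => not_minEdgeConnected_of_gDeg_lt hu hy hxy h
    refine ⟨?_, fun hMN => ?_⟩
    · by_contra hcard
      rcases Ne.lt_or_gt hcard with hlt | hlt
      exacts [hdeg (exists_gDeg_lt_of_card_lt hM hN hlt),
        hdeg (exists_gDeg_lt_of_card_lt hN hM hlt)]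
    · by_contra hinf
      exact hdeg (exists_gDeg_lt_of_inf_ne_bot hM hN hMN hinf)
  · intro hcond
    obtain ⟨M₀, hM₀, -⟩ := exists_isMaxCyclic_le (1 : G)
    refine minEdgeConnected_of_gDeg_eq hu (d := Nat.card M₀ - 1) fun x hx => ?_
    obtain ⟨M, hM, hxM⟩ := exists_isMaxCyclic_le x
    rw [gDeg_eq_card_sub_one_of_mem (fun M N hM hN => (hcond M N hM hN).2) hM
      (hxM (Subgroup.mem_zpowers x)) hx, (hcond M M₀ hM hM₀).1]

/-- For a finite non-cyclic group `G`, the enhanced power graph is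
minimally edge connected iff any two maximal cyclic subgroups have the same order
and any two distinct ones intersect trivially. -/
theorem stmt_2 (G : Type*) [Group G] [Fintype G] (hnc : ¬ IsCyclic G) :
    MinEdgeConnected (enhancedPowerGraph G) ↔
      ∀ M N : Subgroup G, IsMaxCyclic M → IsMaxCyclic N →
        Nat.card M = Nat.card N ∧ (M ≠ N → M ⊓ N = ⊥) :=
  stmt_2_general G
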